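/- For a twice continuously differentiable function f : ℝ³ → ℝ of variables (φ, θ, z), define the first-order operators X̄f = cos(θ−z)·∂_φ f + (1/2)·sin(z−θ)·(cot(φ/2) + tan(φ/2))·∂_θ f + tan(φ/2)·sin(z−θ)·∂_z f and Ȳf = sin(θ−z)·∂_φ f + (1/2)·cos(θ−z)·(cot(φ/2) + tan(φ/2))·∂_θ f + tan(φ/2)·cos(z−θ)·∂_z f. Then at every point p = (φ, θ, z) with sin φ ≠ 0, and for every f that is C² on a neighbourhood of p: X̄(X̄f)(p) + Ȳ(Ȳf)(p) = ∂²_{φφ}f(p) + (1/sin²φ)·∂²_{θθ}f(p) + tan²(φ/2)·∂²_{zz}f(p) + (1/cos²(φ/2))·∂²_{θz}f(p) + cot(φ)·∂_φ f(p). (X̄ and Ȳ are the left-invariant vector fields of SU(2) in cylindrical coordinates, and the right-hand side is twice the subLaplacian of SU(2).) -/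

import Mathlib

/-- Partial derivative of `f : ℝ³ → ℝ` in the `i`-th coordinate direction. -/
noncomputable def pd (i : Fin 3) (f : (Fin 3 → ℝ) → ℝ) : (Fin 3 → ℝ) → ℝ :=
  fun p => fderiv ℝ f p (Pi.single i 1)

/-- The left-invariant vector field `X̄` of `SU(2)` in cylindrical coordinates
`p = (φ, θ, z)`, acting on functions. -/
noncomputable def Xbar (f : (Fin 3 → ℝ) → ℝ) : (Fin 3 → ℝ) → ℝ := fun p =>
  Real.cos (p 1 - p 2) * pd 0 f p +
    1 / 2 * Real.sin (p 2 - p 1) * (Real.cot (p 0 / 2) + Real.tan (p 0 / 2)) * pd 1 f p +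
    Real.tan (p 0 / 2) * Real.sin (p 2 - p 1) * pd 2 f p

/-- The left-invariant vector field `Ȳ` of `SU(2)` in cylindrical coordinates
`p = (φ, θ, z)`, acting on functions. -/
noncomputable def Ybar (f : (Fin 3 → ℝ) → ℝ) : (Fin 3 → ℝ) → ℝ := fun p =>
  Real.sin (p 1 - p 2) * pd 0 f p +
    1 / 2 * Real.cos (p 1 - p 2) * (Real.cot (p 0 / 2) + Real.tan (p 0 / 2)) * pd 1 f p +
    Real.tan (p 0 / 2) * Real.cos (p 2 - p 1) * pd 2 f p

/-!
With `u = θ - z` and `W = csc φ ∂_θ + tan (φ/2) ∂_z` (note `(cot (φ/2) + tan (φ/2)) / 2 = csc φ`),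
`X̄ = cos u ∂_φ - sin u W` and `Ȳ = sin u ∂_φ + cos u W`: the pair `(X̄, Ȳ)` is the frame
`(∂_φ, W)` rotated by the angle `u`. The second-order parts of `X̄² + Ȳ²` are therefore those of
`∂_φ² + W²`. The first-order parts come from differentiating the coefficients: the
`φ`-derivatives cancel in pairs, and what is left is `(W u) ∂_φ = (csc φ - tan (φ/2)) ∂_φ
= cot φ ∂_φ`.
-/

open Real

noncomputable def vectorField (a : Fin 3 → (Fin 3 → ℝ) → ℝ) (f : (Fin 3 → ℝ) → ℝ) :
    (Fin 3 → ℝ) → ℝ :=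
  fun q => ∑ j, a j q * pd j f q

noncomputable def sepCoeff (α β : ℝ → ℝ) : (Fin 3 → ℝ) → ℝ :=
  fun q => α (q 0) * β (q 1 - q 2)

section VectorField

variable {p : Fin 3 → ℝ}

theorem pd_eq_of_hasFDerivAt {g : (Fin 3 → ℝ) → ℝ} {g' : (Fin 3 → ℝ) →L[ℝ] ℝ}
    (h : HasFDerivAt g g' p) (i : Fin 3) : pd i g p = g' (Pi.single i 1) := by
  rw [pd, h.fderiv]

theorem ContDiffAt.differentiableAt_pd {f : (Fin 3 → ℝ) → ℝ} (hf : ContDiffAt ℝ 2 f p)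
    (i : Fin 3) : DifferentiableAt ℝ (pd i f) p :=
  ((hf.fderiv_right le_rfl).differentiableAt one_ne_zero).clm_apply (differentiableAt_const _)

theorem ContDiffAt.pd_pd_comm {f : (Fin 3 → ℝ) → ℝ} (hf : ContDiffAt ℝ 2 f p) (i j : Fin 3) :
    pd i (pd j f) p = pd j (pd i f) p := by
  have hd := (hf.fderiv_right le_rfl).differentiableAt one_ne_zero
  have hsymm :=
    hf.isSymmSndFDerivAt (by simp [minSmoothness_of_isRCLikeNormedField])
  unfold pd
  simp only [fderiv_clm_apply hd (differentiableAt_const _), fderiv_fun_const, Pi.zero_apply,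
    ContinuousLinearMap.comp_zero, zero_add, ContinuousLinearMap.flip_apply]
  exact hsymm _ _

theorem pd_mul {a g : (Fin 3 → ℝ) → ℝ} (ha : DifferentiableAt ℝ a p)
    (hg : DifferentiableAt ℝ g p) (i : Fin 3) :
    pd i (fun q => a q * g q) p = pd i a p * g p + a p * pd i g p := by
  simp only [pd, fderiv_fun_mul ha hg, add_apply, smul_apply, smul_eq_mul]
  ring

theorem pd_sum {ι : Type*} (s : Finset ι) {g : ι → (Fin 3 → ℝ) → ℝ}
    (hg : ∀ k ∈ s, DifferentiableAt ℝ (g k) p) (i : Fin 3) :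
    pd i (fun q => ∑ k ∈ s, g k q) p = ∑ k ∈ s, pd i (g k) p := by
  simp only [pd, fderiv_fun_sum hg, sum_apply]

theorem vectorField_vectorField_apply {a : Fin 3 → (Fin 3 → ℝ) → ℝ}
    (ha : ∀ j, DifferentiableAt ℝ (a j) p) {f : (Fin 3 → ℝ) → ℝ}
    (hf : ∀ j, DifferentiableAt ℝ (pd j f) p) :
    vectorField a (vectorField a f) p =
      ∑ i, ∑ j, a i p * a j p * pd i (pd j f) p + ∑ j, vectorField a (a j) p * pd j f p := by
  unfold vectorField
  simp only [pd_sum (g := fun j q => a j q * pd j f q) Finset.univ (fun j _ => (ha j).mul (hf j)),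
    pd_mul (ha _) (hf _), Finset.mul_sum, Finset.sum_mul, mul_add, Finset.sum_add_distrib]
  rw [add_comm, Finset.sum_comm (f := fun i j => a i p * (pd i (a j) p * pd j f p))]
  simp only [mul_assoc]

theorem vectorField_sq_add_vectorField_sq_apply {a b : Fin 3 → (Fin 3 → ℝ) → ℝ}
    (ha : ∀ j, DifferentiableAt ℝ (a j) p) (hb : ∀ j, DifferentiableAt ℝ (b j) p)
    {f : (Fin 3 → ℝ) → ℝ} (hf : ∀ j, DifferentiableAt ℝ (pd j f) p) :
    vectorField a (vectorField a f) p + vectorField b (vectorField b f) p =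
      ∑ i, ∑ j, (a i p * a j p + b i p * b j p) * pd i (pd j f) p +
        ∑ j, (vectorField a (a j) p + vectorField b (b j) p) * pd j f p := by
  simp only [vectorField_vectorField_apply ha hf, vectorField_vectorField_apply hb hf, add_mul,
    Finset.sum_add_distrib]
  ring

theorem differentiableAt_sepCoeff {α β : ℝ → ℝ} (hα : DifferentiableAt ℝ α (p 0))
    (hβ : DifferentiableAt ℝ β (p 1 - p 2)) : DifferentiableAt ℝ (sepCoeff α β) p := by
  unfold sepCoeff
  fun_prop

theorem vectorField_sepCoeff_apply (a : Fin 3 → (Fin 3 → ℝ) → ℝ) {α β : ℝ → ℝ} {α' β' : ℝ}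
    (hα : HasDerivAt α α' (p 0)) (hβ : HasDerivAt β β' (p 1 - p 2)) :
    vectorField a (sepCoeff α β) p =
      a 0 p * α' * β (p 1 - p 2) + (a 1 p - a 2 p) * α (p 0) * β' := by
  have hproj (i : Fin 3) : HasFDerivAt (fun q : Fin 3 → ℝ => q i)
      (ContinuousLinearMap.proj (R := ℝ) (φ := fun _ => ℝ) i) p := hasFDerivAt_apply i p
  have h : HasFDerivAt (sepCoeff α β) _ p :=
    (hα.comp_hasFDerivAt p (hproj 0)).mul (hβ.comp_hasFDerivAt p ((hproj 1).sub (hproj 2)))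
  simp only [vectorField, Fin.sum_univ_three, pd_eq_of_hasFDerivAt h, Function.comp_apply,
    add_apply, smul_apply, sub_apply, ContinuousLinearMap.proj_apply, Pi.single_apply,
    Fin.reduceEq, ↓reduceIte, smul_eq_mul]
  ring

end VectorField

section HalfAngle

variable {x : ℝ}

theorem sin_eq_two_mul_sin_half_mul_cos_half (x : ℝ) :
    sin x = 2 * sin (x / 2) * cos (x / 2) := by
  rw [← sin_two_mul, mul_div_cancel₀ x two_ne_zero]

theorem cos_eq_cos_half_sq_sub_sin_half_sq (x : ℝ) :
    cos x = cos (x / 2) ^ 2 - sin (x / 2) ^ 2 := by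
  have h := cos_two_mul (x / 2)
  rw [mul_div_cancel₀ x two_ne_zero] at h
  linear_combination h + sin_sq_add_cos_sq (x / 2)

theorem sin_half_ne_zero (hx : sin x ≠ 0) : sin (x / 2) ≠ 0 := fun h =>
  hx (by rw [sin_eq_two_mul_sin_half_mul_cos_half, h, mul_zero, zero_mul])

theorem cos_half_ne_zero (hx : sin x ≠ 0) : cos (x / 2) ≠ 0 := fun h =>
  hx (by rw [sin_eq_two_mul_sin_half_mul_cos_half, h, mul_zero])

-- No hypothesis on `x`: where `sin x = 0`, both sides vanish since `cot`, `tan` and `/ 0`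
-- are `0` there.
theorem cot_half_add_tan_half (x : ℝ) : cot (x / 2) + tan (x / 2) = 2 / sin x := by
  rw [cot_eq_cos_div_sin, tan_eq_sin_div_cos, sin_eq_two_mul_sin_half_mul_cos_half x]
  rcases eq_or_ne (sin (x / 2)) 0 with hs | hs
  · simp [hs]
  rcases eq_or_ne (cos (x / 2)) 0 with hc | hc
  · simp [hc]
  field_simp
  linear_combination sin_sq_add_cos_sq (x / 2)

theorem one_div_sin_sub_tan_half (x : ℝ) : 1 / sin x - tan (x / 2) = cot x := by
  rw [cot_eq_cos_div_sin, tan_eq_sin_div_cos, sin_eq_two_mul_sin_half_mul_cos_half x,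
    cos_eq_cos_half_sq_sub_sin_half_sq x]
  rcases eq_or_ne (sin (x / 2)) 0 with hs | hs
  · simp [hs]
  rcases eq_or_ne (cos (x / 2)) 0 with hc | hc
  · simp [hc]
  field_simp
  linear_combination -sin_sq_add_cos_sq (x / 2)

theorem tan_half_div_sin (hx : sin x ≠ 0) :
    tan (x / 2) / sin x = 1 / (2 * cos (x / 2) ^ 2) := by
  have hs := sin_half_ne_zero hx
  have hc := cos_half_ne_zero hx
  rw [tan_eq_sin_div_cos, sin_eq_two_mul_sin_half_mul_cos_half x]
  field_simp

theorem differentiableAt_cot (hx : sin x ≠ 0) : DifferentiableAt ℝ cot x := by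
  rw [show cot = fun y => cos y / sin y from funext cot_eq_cos_div_sin]
  exact differentiableAt_cos.div differentiableAt_sin hx

theorem differentiableAt_tan_half (hx : sin x ≠ 0) :
    DifferentiableAt ℝ (fun φ => tan (φ / 2)) x :=
  (differentiableAt_tan.2 (cos_half_ne_zero hx)).comp (f := fun φ : ℝ => φ / 2) x
    (differentiableAt_id.div_const 2)

theorem differentiableAt_cot_half_add_tan_half (hx : sin x ≠ 0) :
    DifferentiableAt ℝ (fun φ => (cot (φ / 2) + tan (φ / 2)) / 2) x :=
  (((differentiableAt_cot (sin_half_ne_zero hx)).comp (f := fun φ : ℝ => φ / 2) x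
    (differentiableAt_id.div_const 2)).add (differentiableAt_tan_half hx)).div_const 2

end HalfAngle

noncomputable def xbarCoeff : Fin 3 → (Fin 3 → ℝ) → ℝ
  | 0 => sepCoeff (fun _ => 1) cos
  | 1 => sepCoeff (fun φ => -((cot (φ / 2) + tan (φ / 2)) / 2)) sin
  | 2 => sepCoeff (fun φ => -tan (φ / 2)) sin

noncomputable def ybarCoeff : Fin 3 → (Fin 3 → ℝ) → ℝ
  | 0 => sepCoeff (fun _ => 1) sin
  | 1 => sepCoeff (fun φ => (cot (φ / 2) + tan (φ / 2)) / 2) cos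
  | 2 => sepCoeff (fun φ => tan (φ / 2)) cos

theorem Xbar_eq_vectorField : Xbar = vectorField xbarCoeff := by
  funext f q
  simp only [Xbar, vectorField, Fin.sum_univ_three, xbarCoeff, sepCoeff]
  rw [← neg_sub (q 1), sin_neg]
  ring

theorem Ybar_eq_vectorField : Ybar = vectorField ybarCoeff := by
  funext f q
  simp only [Ybar, vectorField, Fin.sum_univ_three, ybarCoeff, sepCoeff]
  rw [← neg_sub (q 1), cos_neg]
  ring

noncomputable def wCoeff (φ : ℝ) : Fin 3 → ℝ := ![0, 1 / sin φ, tan (φ / 2)]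

section Coefficients

variable (p : Fin 3 → ℝ)

theorem xbarCoeff_apply (j : Fin 3) :
    xbarCoeff j p = cos (p 1 - p 2) * ![1, 0, 0] j - sin (p 1 - p 2) * wCoeff (p 0) j := by
  fin_cases j <;>
    simp only [Fin.zero_eta, Fin.mk_one, Fin.reduceFinMk, xbarCoeff, sepCoeff, wCoeff,
      Matrix.cons_val, cot_half_add_tan_half] <;>
    ring

theorem ybarCoeff_apply (j : Fin 3) :
    ybarCoeff j p = sin (p 1 - p 2) * ![1, 0, 0] j + cos (p 1 - p 2) * wCoeff (p 0) j := by
  fin_cases j <;>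
    simp only [Fin.zero_eta, Fin.mk_one, Fin.reduceFinMk, ybarCoeff, sepCoeff, wCoeff,
      Matrix.cons_val, cot_half_add_tan_half] <;>
    ring

theorem xbarCoeff_mul_add_ybarCoeff_mul (i j : Fin 3) :
    xbarCoeff i p * xbarCoeff j p + ybarCoeff i p * ybarCoeff j p =
      ![1, 0, 0] i * ![1, 0, 0] j + wCoeff (p 0) i * wCoeff (p 0) j := by
  rw [xbarCoeff_apply, xbarCoeff_apply, ybarCoeff_apply, ybarCoeff_apply]
  linear_combination (![1, 0, 0] i * ![1, 0, 0] j + wCoeff (p 0) i * wCoeff (p 0) j) *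
    sin_sq_add_cos_sq (p 1 - p 2)

variable {p}

theorem differentiableAt_xbarCoeff (hp : sin (p 0) ≠ 0) (j : Fin 3) :
    DifferentiableAt ℝ (xbarCoeff j) p := by
  have hT := differentiableAt_cot_half_add_tan_half hp
  have ht := differentiableAt_tan_half hp
  fin_cases j <;> simp only [xbarCoeff] <;>
    exact differentiableAt_sepCoeff (by fun_prop) (by fun_prop)

theorem differentiableAt_ybarCoeff (hp : sin (p 0) ≠ 0) (j : Fin 3) :
    DifferentiableAt ℝ (ybarCoeff j) p := by
  have hT := differentiableAt_cot_half_add_tan_half hp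
  have ht := differentiableAt_tan_half hp
  fin_cases j <;> simp only [ybarCoeff] <;>
    exact differentiableAt_sepCoeff (by fun_prop) (by fun_prop)

theorem vectorField_xbarCoeff_add_ybarCoeff (hp : sin (p 0) ≠ 0) (j : Fin 3) :
    vectorField xbarCoeff (xbarCoeff j) p + vectorField ybarCoeff (ybarCoeff j) p =
      ![cot (p 0), 0, 0] j := by
  have h1 : HasDerivAt (fun _ => (1 : ℝ)) 0 (p 0) := hasDerivAt_const _ _
  have hT := (differentiableAt_cot_half_add_tan_half hp).hasDerivAt
  have hTn : HasDerivAt (fun φ => -((cot (φ / 2) + tan (φ / 2)) / 2)) _ (p 0) := hT.neg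
  have ht := (differentiableAt_tan_half hp).hasDerivAt
  have htn : HasDerivAt (fun φ => -tan (φ / 2)) _ (p 0) := ht.neg
  have hsin := hasDerivAt_sin (p 1 - p 2)
  have hcos := hasDerivAt_cos (p 1 - p 2)
  fin_cases j <;>
    simp only [Fin.zero_eta, Fin.mk_one, Fin.reduceFinMk, Matrix.cons_val, xbarCoeff, ybarCoeff]
  · rw [vectorField_sepCoeff_apply _ h1 hcos, vectorField_sepCoeff_apply _ h1 hsin,
      ← one_div_sin_sub_tan_half]
    simp only [xbarCoeff, ybarCoeff, sepCoeff, cot_half_add_tan_half]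
    linear_combination (1 / sin (p 0) - tan (p 0 / 2)) * sin_sq_add_cos_sq (p 1 - p 2)
  · rw [vectorField_sepCoeff_apply _ hTn hsin, vectorField_sepCoeff_apply _ hT hcos]
    simp only [xbarCoeff, ybarCoeff, sepCoeff]
    ring
  · rw [vectorField_sepCoeff_apply _ htn hsin, vectorField_sepCoeff_apply _ ht hcos]
    simp only [xbarCoeff, ybarCoeff, sepCoeff]
    ring

end Coefficients

/-- Twice the subLaplacian of `SU(2)` in cylindrical coordinates: at every
point `p = (φ, θ, z)` with `sin φ ≠ 0` and for every `f` that is `C²` near `p`,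
`X̄²f + Ȳ²f = ∂²_{φφ}f + (1/sin²φ)∂²_{θθ}f + tan²(φ/2)∂²_{zz}f + (1/cos²(φ/2))∂²_{θz}f
+ cot(φ)∂_φ f`. -/
theorem su2_subLaplacian_cylindrical (p : Fin 3 → ℝ) (hp : Real.sin (p 0) ≠ 0)
    (f : (Fin 3 → ℝ) → ℝ) (hf : ContDiffAt ℝ 2 f p) :
    Xbar (Xbar f) p + Ybar (Ybar f) p =
      pd 0 (pd 0 f) p + 1 / Real.sin (p 0) ^ 2 * pd 1 (pd 1 f) p +
        Real.tan (p 0 / 2) ^ 2 * pd 2 (pd 2 f) p +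
        1 / Real.cos (p 0 / 2) ^ 2 * pd 1 (pd 2 f) p +
        Real.cot (p 0) * pd 0 f p := by
  rw [Xbar_eq_vectorField, Ybar_eq_vectorField,
    vectorField_sq_add_vectorField_sq_apply (differentiableAt_xbarCoeff hp)
      (differentiableAt_ybarCoeff hp) hf.differentiableAt_pd]
  simp only [xbarCoeff_mul_add_ybarCoeff_mul, vectorField_xbarCoeff_add_ybarCoeff hp,
    Fin.sum_univ_three, wCoeff, Matrix.cons_val, hf.pd_pd_comm 2 1]
  linear_combination 2 * pd 1 (pd 2 f) p * tan_half_div_sin hp
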